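/- arXiv:1809.01409 — 5 statements merged into one kernel-verified Lean document; each statement's English description precedes it below -/
import Mathlib

section
/- Say X ⊆ ℤ⁺ gets arbitrarily close to arbitrarily long arithmetic progressions if for all k ∈ ℕ and ε > 0 there exists an arithmetic progression P ⊆ ℝ of length k and gap size Δ > 0 with sup_{p ∈ P} inf_{x ∈ X} |p − x| ≤ εΔ. Then: if X has upper logarithmic density 1 (i.e., limsup_{n→∞} sup_{m≥0} log(#(X ∩ [m+1,m+n]))/log n = 1), then X gets arbitrarily close to arbitrarily long arithmetic progressions. -/
set_option maxHeartbeats 1000000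

open Set Filter Real

noncomputable def cnt (X : Set ℕ) (a L : ℝ) : ℕ :=
  (X ∩ {y : ℕ | a ≤ (y : ℝ) ∧ (y : ℝ) ≤ a + L}).ncard

lemma cnt_finite (X : Set ℕ) (a L : ℝ) :
    (X ∩ {y : ℕ | a ≤ (y : ℝ) ∧ (y : ℝ) ≤ a + L}).Finite := by
  apply (Set.finite_Iic (⌈a + L⌉₊)).subset
  rintro y ⟨-, -, h2⟩
  have : (y : ℝ) ≤ (⌈a + L⌉₊ : ℝ) := h2.trans (Nat.le_ceil _)
  exact_mod_cast this

lemma cnt_cover (X : Set ℕ) {a L b M c M' : ℝ}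
    (h : ∀ y : ℕ, y ∈ X → a ≤ (y:ℝ) → (y:ℝ) ≤ a + L →
      (b ≤ (y:ℝ) ∧ (y:ℝ) ≤ b + M) ∨ (c ≤ (y:ℝ) ∧ (y:ℝ) ≤ c + M')) :
    cnt X a L ≤ cnt X b M + cnt X c M' := by
  have hsub : (X ∩ {y : ℕ | a ≤ (y:ℝ) ∧ (y:ℝ) ≤ a + L}) ⊆
      (X ∩ {y : ℕ | b ≤ (y:ℝ) ∧ (y:ℝ) ≤ b + M}) ∪
      (X ∩ {y : ℕ | c ≤ (y:ℝ) ∧ (y:ℝ) ≤ c + M'}) := by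
    rintro y ⟨hy, h1, h2⟩
    rcases h y hy h1 h2 with h' | h'
    · exact Or.inl ⟨hy, h'⟩
    · exact Or.inr ⟨hy, h'⟩
  calc cnt X a L ≤ ((X ∩ {y : ℕ | b ≤ (y:ℝ) ∧ (y:ℝ) ≤ b + M}) ∪
      (X ∩ {y : ℕ | c ≤ (y:ℝ) ∧ (y:ℝ) ≤ c + M'})).ncard :=
        Set.ncard_le_ncard hsub ((cnt_finite X b M).union (cnt_finite X c M'))
    _ ≤ _ := Set.ncard_union_le _ _

lemma cnt_blocks (X : Set ℕ) (a Δ : ℝ) (hΔ : 0 ≤ Δ) :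
    ∀ m : ℕ, 1 ≤ m → cnt X a (m * Δ) ≤ ∑ j ∈ Finset.range m, cnt X (a + j * Δ) Δ := by
  intro m hm
  induction m, hm using Nat.le_induction with
  | base =>
      simp only [Nat.cast_one, one_mul, Finset.range_one, Finset.sum_singleton,
        Nat.cast_zero, zero_mul, add_zero]
      exact le_refl _
  | succ m hm ih =>
      have hcover : cnt X a ((m + 1 : ℕ) * Δ) ≤ cnt X a (m * Δ) + cnt X (a + m * Δ) Δ := by
        apply cnt_cover
        intro y hy h1 h2
        rcases le_or_gt (y : ℝ) (a + m * Δ) with h | h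
        · exact Or.inl ⟨h1, h⟩
        · refine Or.inr ⟨h.le, ?_⟩
          push_cast at h2 ⊢
          linarith
      refine hcover.trans ?_
      rw [Finset.sum_range_succ]
      exact Nat.add_le_add ih (le_refl _)

lemma cnt_le_len (X : Set ℕ) (a L : ℝ) (hL : 0 ≤ L) : (cnt X a L : ℝ) ≤ L + 1 := by
  have hsub : (X ∩ {y : ℕ | a ≤ (y : ℝ) ∧ (y : ℝ) ≤ a + L}) ⊆
      Set.Icc ⌈a⌉₊ (⌈a⌉₊ + ⌊L⌋₊) := by
    rintro y ⟨-, h1, h2⟩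
    constructor
    · exact Nat.ceil_le.mpr h1
    · have hceil : a ≤ (⌈a⌉₊ : ℝ) := Nat.le_ceil a
      have h3 : (y : ℝ) ≤ (⌈a⌉₊ : ℝ) + L := by linarith
      have h4 : ((y - ⌈a⌉₊ : ℕ) : ℝ) ≤ L := by
        rcases le_or_gt (⌈a⌉₊ : ℕ) y with h | h
        · push_cast [h]; linarith
        · simp [Nat.sub_eq_zero_of_le h.le, hL]
      have h5 : y - ⌈a⌉₊ ≤ ⌊L⌋₊ := Nat.le_floor h4
      omega
  have hcard : cnt X a L ≤ (Set.Icc ⌈a⌉₊ (⌈a⌉₊ + ⌊L⌋₊)).ncard :=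
    Set.ncard_le_ncard hsub (Set.finite_Icc _ _)
  have : (Set.Icc ⌈a⌉₊ (⌈a⌉₊ + ⌊L⌋₊)).ncard = ⌊L⌋₊ + 1 := by
    rw [← Finset.coe_Icc, Set.ncard_coe_finset, Nat.card_Icc]
    omega
  rw [this] at hcard
  calc (cnt X a L : ℝ) ≤ ((⌊L⌋₊ + 1 : ℕ) : ℝ) := by exact_mod_cast hcard
    _ ≤ L + 1 := by push_cast; have := Nat.floor_le hL; linarith

lemma exists_s (k : ℕ) (hk : 2 ≤ k) (t : ℝ) (ht0 : 0 < t) (ht1 : 2 * t < 1) :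
    ∃ s : ℝ, 1/2 < s ∧ s < 1 ∧
      ((k:ℝ) - 1) * (1/(k:ℝ)) ^ s + 2 * (t/(k:ℝ)) ^ s < 1 := by
  have hkR : (0:ℝ) < k := by positivity
  set ψ : ℝ → ℝ := fun s => ((k:ℝ) - 1) * (1/(k:ℝ)) ^ s + 2 * (t/(k:ℝ)) ^ s with hψ
  have hbase : ∀ c : ℝ, 0 < c → Continuous fun s : ℝ => c ^ s := by
    intro c hc
    have : (fun s : ℝ => c ^ s) = fun s => Real.exp (Real.log c * s) := by
      funext s; rw [Real.rpow_def_of_pos hc]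
    rw [this]; fun_prop
  have hc : Continuous ψ := by
    apply Continuous.add
    · exact continuous_const.mul (hbase _ (by positivity))
    · exact continuous_const.mul (hbase _ (by positivity))
  have hψ1 : ψ 1 < 1 := by
    have h2 : ((k:ℝ) - 1) * (1/(k:ℝ)) + 2 * (t/(k:ℝ)) = ((k:ℝ) - 1 + 2*t) / k := by
      field_simp
    have hk1 : (1:ℝ) ≤ (k:ℝ) := by exact_mod_cast Nat.one_le_of_lt hk
    simp only [hψ, Real.rpow_one]
    rw [h2, div_lt_one hkR]
    linarith
  have hev : ∀ᶠ s in nhds (1:ℝ), ψ s < 1 := by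
    have := hc.continuousAt (x := 1) |>.preimage_mem_nhds (IsOpen.mem_nhds isOpen_Iio hψ1)
    exact eventually_of_mem this (fun s hs => hs)
  have hev' : ∀ᶠ s in nhdsWithin (1:ℝ) (Set.Iio 1), ψ s < 1 := hev.filter_mono nhdsWithin_le_nhds
  have hIoo : Set.Ioo (1/2 : ℝ) 1 ∈ nhdsWithin (1:ℝ) (Set.Iio 1) :=
    Ioo_mem_nhdsLT_of_mem (by norm_num)
  have hev2 : ∀ᶠ s in nhdsWithin (1:ℝ) (Set.Iio 1), s ∈ Set.Ioo (1/2:ℝ) 1 :=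
    eventually_of_mem hIoo (fun s hs => hs)
  obtain ⟨s, hs1, hs2⟩ := (hev'.and hev2).exists
  exact ⟨s, hs2.1, hs2.2, hs1⟩

lemma key (X : Set ℕ) (k : ℕ) (hk : 2 ≤ k) (ε : ℝ) (hε0 : 0 < ε) (hε1 : ε ≤ 1/4)
    (hfar : ∀ x Δ : ℝ, 0 < Δ → ∃ i, i < k ∧ ∀ y ∈ X, ε * Δ < |x + i * Δ - (y:ℝ)|) :
    ∃ s C : ℝ, 1/2 < s ∧ s < 1 ∧ 1 ≤ C ∧
      ∀ L : ℝ, 0 ≤ L → ∀ a : ℝ, (cnt X a L : ℝ) ≤ C * (L+1) ^ s := by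
  have hkR : (0:ℝ) < k := by positivity
  have hk2 : (2:ℝ) ≤ k := by exact_mod_cast hk
  obtain ⟨t, htdef⟩ : ∃ t : ℝ, t = 1/2 - ε := ⟨_, rfl⟩
  have ht0 : 0 < t := by rw [htdef]; linarith
  have ht1 : 2 * t < 1 := by rw [htdef]; linarith
  have htle1 : t ≤ 1 := by rw [htdef]; linarith
  obtain ⟨s, hshalf, hs1, hθlt'⟩ := exists_s k hk t ht0 ht1
  have hs0 : 0 < s := by linarith
  obtain ⟨θ, hθdef⟩ : ∃ θ : ℝ, θ = ((k:ℝ) - 1) * (1/(k:ℝ)) ^ s + 2 * (t/(k:ℝ)) ^ s := ⟨_, rfl⟩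
  have hθlt : θ < 1 := by rw [hθdef]; exact hθlt'
  have hθ0 : 0 < θ := by
    have h1 : (0:ℝ) < ((k:ℝ) - 1) * (1/(k:ℝ)) ^ s :=
      mul_pos (by linarith) (Real.rpow_pos_of_pos (by positivity) s)
    have h2 : (0:ℝ) < 2 * (t/(k:ℝ)) ^ s :=
      mul_pos (by norm_num) (Real.rpow_pos_of_pos (by positivity) s)
    rw [hθdef]; linarith
  have h1θ : 0 < 1 - θ := by linarith
  obtain ⟨L₁, hL₁def⟩ : ∃ L₁ : ℝ, L₁ = 2 + (k:ℝ) / (t * (1 - θ)) := ⟨_, rfl⟩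
  have hL₁2 : 2 ≤ L₁ := by
    have h0 : 0 ≤ (k:ℝ) / (t * (1 - θ)) := le_of_lt (div_pos hkR (mul_pos ht0 h1θ))
    rw [hL₁def]; linarith
  have hL₁pos : (0:ℝ) < L₁ := by linarith
  have hβθ : (1 + (k:ℝ) / (t * L₁)) * θ ≤ 1 := by
    have htL₁ : 0 < t * L₁ := mul_pos ht0 hL₁pos
    have h3 : (k:ℝ) ≤ t * (1-θ) * L₁ := by
      have h2 : (k:ℝ) / (t * (1-θ)) ≤ L₁ := by rw [hL₁def]; linarith
      rw [div_le_iff₀ (mul_pos ht0 h1θ)] at h2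
      linarith
    have h4 : (k:ℝ) / (t * L₁) * θ ≤ 1 - θ := by
      rw [div_mul_eq_mul_div, div_le_iff₀ htL₁]
      nlinarith
    nlinarith
  obtain ⟨C, hCdef⟩ : ∃ C : ℝ, C = (L₁ + 1) ^ (1 - s) := ⟨_, rfl⟩
  have hC1 : 1 ≤ C := by
    rw [hCdef]; exact Real.one_le_rpow (by linarith) (by linarith)
  have hC0 : 0 < C := by linarith
  refine ⟨s, C, hshalf, hs1, hC1, ?_⟩
  have main : ∀ n : ℕ, ∀ L : ℝ, 0 ≤ L → L ≤ n → ∀ a : ℝ, (cnt X a L : ℝ) ≤ C * (L+1) ^ s := by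
    intro n
    induction n using Nat.strong_induction_on with
    | _ n ih =>
    intro L hL0 hLn a
    have hL1pos : (0:ℝ) < L + 1 := by linarith
    rcases le_or_gt L L₁ with hcase | hcase
    · -- base case
      have h1 : (cnt X a L : ℝ) ≤ L + 1 := cnt_le_len X a L hL0
      have h2 : L + 1 = (L+1) ^ (1-s) * (L+1) ^ s := by
        rw [← Real.rpow_add hL1pos, sub_add_cancel, Real.rpow_one]
      have h3 : (L+1) ^ (1-s) ≤ C := by
        rw [hCdef]
        exact Real.rpow_le_rpow (by linarith) (by linarith) (by linarith)
      have h4 : (0:ℝ) ≤ (L+1) ^ s := Real.rpow_nonneg (by linarith) s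
      calc (cnt X a L : ℝ) ≤ (L+1) ^ (1-s) * (L+1) ^ s := by rw [← h2]; exact h1
        _ ≤ C * (L+1) ^ s := mul_le_mul_of_nonneg_right h3 h4
    · -- recursive case
      have hLpos : 0 < L := by linarith
      obtain ⟨Δ, hΔdef⟩ : ∃ Δ : ℝ, Δ = L / k := ⟨_, rfl⟩
      have hΔpos : 0 < Δ := by rw [hΔdef]; positivity
      have htΔpos : 0 < t * Δ := mul_pos ht0 hΔpos
      obtain ⟨i, hik, hfari⟩ := hfar (a + Δ/2) Δ hΔpos
      have hgap : ∀ y ∈ X, (y:ℝ) ≤ a + i*Δ + t*Δ ∨ a + i*Δ + Δ - t*Δ ≤ (y:ℝ) := by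
        intro y hy
        have h := hfari y hy
        rcases lt_abs.mp h with h' | h'
        · left; rw [htdef]; linarith
        · right; rw [htdef]; linarith
      have hn3 : 3 ≤ n := by
        have h2 : (2:ℝ) < (n:ℝ) := by linarith
        have h2' : 2 < n := by exact_mod_cast h2
        omega
      have hn1cast : ((n - 1 : ℕ) : ℝ) = (n:ℝ) - 1 := by
        have : 1 ≤ n := by omega
        push_cast [this]; ring
      have hΔn : Δ ≤ ((n - 1 : ℕ) : ℝ) := by
        rw [hn1cast]
        have h1 : Δ ≤ L / 2 := by
          rw [hΔdef]
          exact div_le_div_of_nonneg_left hL0 (by norm_num) hk2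
        have h2 : (3:ℝ) ≤ (n:ℝ) := by exact_mod_cast hn3
        linarith
      have ihΔ : ∀ b : ℝ, (cnt X b Δ : ℝ) ≤ C * (Δ+1) ^ s :=
        fun b => ih (n-1) (by omega) Δ hΔpos.le hΔn b
      have ihtΔ : ∀ b : ℝ, (cnt X b (t*Δ) : ℝ) ≤ C * (t*Δ+1) ^ s := by
        intro b
        refine ih (n-1) (by omega) (t*Δ) htΔpos.le ?_ b
        nlinarith
      have hLk : L = (k:ℝ) * Δ := by rw [hΔdef]; field_simp
      have hchain : cnt X a L ≤ ∑ j ∈ Finset.range k, cnt X (a + j*Δ) Δ := by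
        have h := cnt_blocks X a Δ hΔpos.le k (by omega)
        rw [hLk]; exact h
      have hbad : cnt X (a + i*Δ) Δ ≤
          cnt X (a + i*Δ) (t*Δ) + cnt X (a + i*Δ + Δ - t*Δ) (t*Δ) := by
        apply cnt_cover
        intro y hy h1 h2
        rcases hgap y hy with h | h
        · exact Or.inl ⟨h1, by linarith⟩
        · exact Or.inr ⟨h, by linarith⟩
      have hΔ1nn : (0:ℝ) ≤ (Δ+1) ^ s := Real.rpow_nonneg (by linarith) s
      have hsum : ((∑ j ∈ Finset.range k, cnt X (a + j*Δ) Δ : ℕ) : ℝ)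
          ≤ ((k:ℝ) - 1) * (C * (Δ+1) ^ s) + 2 * (C * (t*Δ+1) ^ s) := by
        rw [← Finset.sum_erase_add _ _ (Finset.mem_range.mpr hik)]
        have herase : ((∑ j ∈ (Finset.range k).erase i, cnt X (a + j*Δ) Δ : ℕ) : ℝ)
            ≤ ((k:ℝ) - 1) * (C * (Δ+1) ^ s) := by
          push_cast
          have hcard : ((Finset.range k).erase i).card = k - 1 := by
            rw [Finset.card_erase_of_mem (Finset.mem_range.mpr hik), Finset.card_range]
          calc (∑ j ∈ (Finset.range k).erase i, (cnt X (a + j*Δ) Δ : ℝ))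
              ≤ ∑ _j ∈ (Finset.range k).erase i, C * (Δ+1) ^ s :=
                Finset.sum_le_sum (fun j _ => ihΔ (a + j*Δ))
            _ = ((k:ℝ) - 1) * (C * (Δ+1) ^ s) := by
                rw [Finset.sum_const, hcard, nsmul_eq_mul]
                congr 1
                push_cast [Nat.cast_sub (by omega : 1 ≤ k)]
                ring
        have hbadR : ((cnt X (a + i*Δ) Δ : ℕ) : ℝ) ≤ 2 * (C * (t*Δ+1) ^ s) := by
          have h1 : ((cnt X (a + i*Δ) Δ : ℕ) : ℝ) ≤
              (cnt X (a + i*Δ) (t*Δ) : ℝ) + (cnt X (a + i*Δ + Δ - t*Δ) (t*Δ) : ℝ) := by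
            exact_mod_cast hbad
          have h2 := ihtΔ (a + i*Δ)
          have h3 := ihtΔ (a + i*Δ + Δ - t*Δ)
          linarith
        push_cast at herase hbadR ⊢
        linarith
      -- final arithmetic
      obtain ⟨β, hβdef⟩ : ∃ β : ℝ, β = 1 + (k:ℝ) / (t * L) := ⟨_, rfl⟩
      have hβ1 : 1 ≤ β := by
        have h0 : 0 ≤ (k:ℝ) / (t * L) := le_of_lt (div_pos hkR (mul_pos ht0 hLpos))
        rw [hβdef]; linarith
      have hβθ' : β * θ ≤ 1 := by
        have hmono : (k:ℝ) / (t * L) ≤ (k:ℝ) / (t * L₁) := by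
          apply div_le_div_of_nonneg_left hkR.le (mul_pos ht0 hL₁pos)
          nlinarith
        have hb : β ≤ 1 + (k:ℝ) / (t * L₁) := by rw [hβdef]; linarith
        have := mul_le_mul_of_nonneg_right hb hθ0.le
        linarith
      have hΔβ : Δ + 1 ≤ β * Δ := by
        have h1 : β * Δ = Δ + 1 / t := by
          rw [hβdef, hΔdef]
          field_simp
        have h2 : (1:ℝ) ≤ 1 / t := by rw [le_div_iff₀ ht0]; linarith
        linarith
      have htΔβ : t * Δ + 1 ≤ β * (t * Δ) := by
        have h1 : β * (t * Δ) = t * Δ + 1 := by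
          rw [hβdef, hΔdef]
          field_simp
        linarith
      have hβs : β ^ s ≤ β := by
        calc β ^ s ≤ β ^ (1:ℝ) := Real.rpow_le_rpow_of_exponent_le hβ1 (by linarith)
          _ = β := Real.rpow_one β
      have hβspos : 0 < β ^ s := Real.rpow_pos_of_pos (by linarith) s
      have hA : (Δ+1) ^ s ≤ β ^ s * Δ ^ s := by
        rw [← Real.mul_rpow (by linarith) hΔpos.le]
        exact Real.rpow_le_rpow (by linarith) hΔβ hs0.le
      have hB : (t*Δ+1) ^ s ≤ β ^ s * (t*Δ) ^ s := by
        rw [← Real.mul_rpow (by linarith) htΔpos.le]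
        exact Real.rpow_le_rpow (by linarith) htΔβ hs0.le
      have htΔrs : (t*Δ) ^ s = t ^ s * Δ ^ s := Real.mul_rpow ht0.le hΔpos.le
      have hθeq : ((k:ℝ) - 1) * Δ ^ s + 2 * (t ^ s * Δ ^ s) = θ * L ^ s := by
        have hΔs : Δ ^ s = L ^ s / (k:ℝ) ^ s := by
          rw [hΔdef, Real.div_rpow hL0 hkR.le]
        have h1 : (1/(k:ℝ)) ^ s = 1 / (k:ℝ) ^ s := by
          rw [Real.div_rpow (by norm_num) hkR.le, Real.one_rpow]
        have h2 : (t/(k:ℝ)) ^ s = t ^ s / (k:ℝ) ^ s := Real.div_rpow ht0.le hkR.le s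
        have hks : (0:ℝ) < (k:ℝ) ^ s := Real.rpow_pos_of_pos hkR s
        rw [hΔs, hθdef, h1, h2]
        field_simp
      have hΔs0 : (0:ℝ) ≤ Δ ^ s := Real.rpow_nonneg hΔpos.le s
      have htΔs0 : (0:ℝ) ≤ (t*Δ) ^ s := Real.rpow_nonneg htΔpos.le s
      have hLs0 : (0:ℝ) ≤ L ^ s := Real.rpow_nonneg hL0 s
      have hfinal : ((k:ℝ) - 1) * (C * (Δ+1) ^ s) + 2 * (C * (t*Δ+1) ^ s) ≤ C * (L+1) ^ s := by
        have e1 : ((k:ℝ) - 1) * (C * (Δ+1) ^ s) ≤ ((k:ℝ) - 1) * (C * (β ^ s * Δ ^ s)) :=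
          mul_le_mul_of_nonneg_left (mul_le_mul_of_nonneg_left hA hC0.le) (by linarith)
        have e2 : 2 * (C * (t*Δ+1) ^ s) ≤ 2 * (C * (β ^ s * (t*Δ) ^ s)) :=
          mul_le_mul_of_nonneg_left (mul_le_mul_of_nonneg_left hB hC0.le) (by norm_num)
        have e3 : ((k:ℝ) - 1) * (C * (β ^ s * Δ ^ s)) + 2 * (C * (β ^ s * (t*Δ) ^ s))
            = C * (β ^ s * (((k:ℝ) - 1) * Δ ^ s + 2 * (t ^ s * Δ ^ s))) := by
          rw [htΔrs]; ring
        have e4 : C * (β ^ s * (((k:ℝ) - 1) * Δ ^ s + 2 * (t ^ s * Δ ^ s)))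
            = C * (β ^ s * θ * L ^ s) := by rw [hθeq]; ring
        have hbsθ : β ^ s * θ ≤ 1 := by
          have h := mul_le_mul_of_nonneg_right hβs hθ0.le
          linarith
        have e5 : C * (β ^ s * θ * L ^ s) ≤ C * (1 * L ^ s) := by
          apply mul_le_mul_of_nonneg_left _ hC0.le
          exact mul_le_mul_of_nonneg_right hbsθ hLs0
        have e6 : C * ((1:ℝ) * L ^ s) = C * L ^ s := by ring
        have e7 : C * L ^ s ≤ C * (L+1) ^ s :=
          mul_le_mul_of_nonneg_left (Real.rpow_le_rpow hL0 (by linarith) hs0.le) hC0.le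
        linarith
      have hcast : ((cnt X a L : ℕ) : ℝ) ≤
          ((∑ j ∈ Finset.range k, cnt X (a + j*Δ) Δ : ℕ) : ℝ) := by exact_mod_cast hchain
      linarith
  intro L hL0 a
  exact main ⌈L⌉₊ L hL0 (Nat.le_ceil L) a

/-- X gets arbitrarily close to arbitrarily long arithmetic progressions. -/
def CloseToAPs (X : Set ℕ) : Prop :=
  ∀ k : ℕ, ∀ ε : ℝ, 0 < ε → ∃ x Δ : ℝ, 0 < Δ ∧
    ∀ i : ℕ, i < k →
      sInf {d : ℝ | ∃ y ∈ X, d = |x + i * Δ - (y : ℝ)|} ≤ ε * Δ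

/-- If X has upper logarithmic density 1, then X gets arbitrarily close to
arbitrarily long arithmetic progressions. -/
theorem closeToAPs_of_density_one (X : Set ℕ) (hX : ∀ x ∈ X, 0 < x)
    (hdens : Filter.atTop.limsup (fun n : ℕ =>
      ⨆ m : ℕ, Real.log ((X ∩ Set.Icc (m + 1) (m + n)).ncard) / Real.log n) = 1) :
    CloseToAPs X := by
  by_contra hcon
  unfold CloseToAPs at hcon
  push_neg at hcon
  obtain ⟨k, ε, hε, hfar0⟩ := hcon
  have hfar : ∀ x Δ : ℝ, 0 < Δ → ∃ i, i < max k 2 ∧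
      ∀ y ∈ X, (min ε (1/4)) * Δ < |x + i * Δ - (y:ℝ)| := by
    intro x Δ hΔ
    obtain ⟨i, hik, hlt⟩ := hfar0 x Δ hΔ
    refine ⟨i, lt_of_lt_of_le hik (le_max_left _ _), ?_⟩
    intro y hy
    have hmem : |x + i * Δ - (y:ℝ)| ∈ {d : ℝ | ∃ y ∈ X, d = |x + i * Δ - (y:ℝ)|} :=
      ⟨y, hy, rfl⟩
    have hbdd : BddBelow {d : ℝ | ∃ y ∈ X, d = |x + i * Δ - (y:ℝ)|} := by
      refine ⟨0, ?_⟩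
      rintro d ⟨z, hz, rfl⟩
      exact abs_nonneg _
    have h1 := csInf_le hbdd hmem
    have hmin : min ε (1/4) * Δ ≤ ε * Δ :=
      mul_le_mul_of_nonneg_right (min_le_left _ _) hΔ.le
    linarith
  obtain ⟨s, C, hshalf, hs1, hC1, hcnt⟩ := key X (max k 2) (le_max_right _ _)
    (min ε (1/4)) (lt_min hε (by norm_num)) (min_le_right _ _) hfar
  have hC0 : (0:ℝ) < C := by linarith
  have hs0 : (0:ℝ) < s := by linarith
  -- cardinality bound
  have hncard : ∀ n m : ℕ, 1 ≤ n →
      (((X ∩ Set.Icc (m + 1) (m + n)).ncard : ℕ) : ℝ) ≤ C * (n:ℝ) ^ s := by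
    intro n m hn
    have hn1 : (1:ℝ) ≤ (n:ℝ) := by exact_mod_cast hn
    have hsub : X ∩ Set.Icc (m + 1) (m + n) ⊆
        X ∩ {y : ℕ | ((m:ℝ)+1) ≤ (y:ℝ) ∧ (y:ℝ) ≤ ((m:ℝ)+1) + ((n:ℝ)-1)} := by
      rintro y ⟨hy, h1, h2⟩
      refine ⟨hy, ?_, ?_⟩
      · exact_mod_cast h1
      · have h2' : (y:ℝ) ≤ (m:ℝ) + (n:ℝ) := by exact_mod_cast h2
        linarith
    have hle : (X ∩ Set.Icc (m + 1) (m + n)).ncard ≤ cnt X ((m:ℝ)+1) ((n:ℝ)-1) :=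
      Set.ncard_le_ncard hsub (cnt_finite X ((m:ℝ)+1) ((n:ℝ)-1))
    have h := hcnt ((n:ℝ)-1) (by linarith) ((m:ℝ)+1)
    have heq : ((n:ℝ) - 1) + 1 = (n:ℝ) := by ring
    rw [heq] at h
    calc (((X ∩ Set.Icc (m + 1) (m + n)).ncard : ℕ) : ℝ)
        ≤ (cnt X ((m:ℝ)+1) ((n:ℝ)-1) : ℝ) := by exact_mod_cast hle
      _ ≤ C * (n:ℝ) ^ s := h
  -- eventual bound on the sup
  have hlogC : 0 ≤ Real.log C := Real.log_nonneg hC1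
  have htends : Filter.Tendsto (fun n : ℕ => Real.log n) Filter.atTop Filter.atTop :=
    Real.tendsto_log_atTop.comp tendsto_natCast_atTop_atTop
  have hev : ∀ᶠ n : ℕ in Filter.atTop,
      (⨆ m : ℕ, Real.log ((X ∩ Set.Icc (m + 1) (m + n)).ncard) / Real.log n) ≤ (1+s)/2 := by
    have h1 : ∀ᶠ n : ℕ in Filter.atTop,
        max 1 (2 * Real.log C / (1 - s)) ≤ Real.log n :=
      htends.eventually_ge_atTop _
    filter_upwards [h1, Filter.eventually_ge_atTop 1] with n hlog hn1
    have hlogn : 0 < Real.log n := lt_of_lt_of_le (by norm_num) (le_trans (le_max_left _ _) hlog)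
    apply ciSup_le
    intro m
    have hcard := hncard n m hn1
    have hlogcard : Real.log ((X ∩ Set.Icc (m + 1) (m + n)).ncard) ≤
        Real.log C + s * Real.log n := by
      rcases Nat.eq_zero_or_pos (X ∩ Set.Icc (m + 1) (m + n)).ncard with h0 | h0
      · rw [h0]
        simp only [Nat.cast_zero, Real.log_zero]
        positivity
      · have hpos : (0:ℝ) < (((X ∩ Set.Icc (m + 1) (m + n)).ncard : ℕ) : ℝ) := by
          exact_mod_cast h0
        have hnpos : (0:ℝ) < (n:ℝ) := by exact_mod_cast hn1
        calc Real.log ((X ∩ Set.Icc (m + 1) (m + n)).ncard)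
            ≤ Real.log (C * (n:ℝ) ^ s) := Real.log_le_log hpos hcard
          _ = Real.log C + s * Real.log n := by
              rw [Real.log_mul (by linarith) (ne_of_gt (Real.rpow_pos_of_pos hnpos s)),
                Real.log_rpow hnpos]
    have hdiv : 2 * Real.log C / (1 - s) ≤ Real.log n :=
      le_trans (le_max_right _ _) hlog
    have hlogCn : Real.log C / Real.log n ≤ (1 - s) / 2 := by
      rw [div_le_div_iff₀ hlogn (by norm_num)]
      rw [div_le_iff₀ (by linarith : (0:ℝ) < 1 - s)] at hdiv
      linarith
    calc Real.log ((X ∩ Set.Icc (m + 1) (m + n)).ncard) / Real.log n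
        ≤ (Real.log C + s * Real.log n) / Real.log n := by
          apply div_le_div_of_nonneg_right hlogcard hlogn.le
      _ = Real.log C / Real.log n + s := by field_simp
      _ ≤ (1 - s) / 2 + s := by linarith
      _ = (1 + s) / 2 := by ring
  have hbdd : Filter.IsBoundedUnder (· ≥ ·) Filter.atTop (fun n : ℕ =>
      ⨆ m : ℕ, Real.log ((X ∩ Set.Icc (m + 1) (m + n)).ncard) / Real.log n) := by
    refine ⟨0, Filter.eventually_map.mpr ?_⟩
    filter_upwards with n
    apply Real.iSup_nonneg
    intro m
    apply div_nonneg
    · exact Real.log_natCast_nonneg _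
    · exact Real.log_natCast_nonneg _
  have hcb : Filter.IsCoboundedUnder (· ≤ ·) Filter.atTop (fun n : ℕ =>
      ⨆ m : ℕ, Real.log ((X ∩ Set.Icc (m + 1) (m + n)).ncard) / Real.log n) :=
    hbdd.isCoboundedUnder_flip
  have hlim := Filter.limsup_le_of_le hcb hev
  rw [hdens] at hlim
  linarith
end

section
/- Suppose X ⊆ ℤ⁺, k ≥ 2 is an integer, and ε > 0 with 1/(2ε) a positive integer, such that for every arithmetic progression P of length k and gap Δ > 0, sup_{p ∈ P} inf_{x ∈ X} |p − x| > εΔ. Then for all integers m ≥ 0 and n ≥ 2, #(X ∩ [m+1, m+n]) ≤ ((k−1)/(2ε)) · n^{log((k−1)/(2ε))/log(k/(2ε))}. -/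
/-!
Put `K = k j` and `C = (k - 1) j`. Cut an interval of length `K ^ (s + 1)` into `K` blocks of
length `δ = K ^ s`. For each residue `r < j`, the progression of the midpoints of the blocks
`r, r + j, …, r + (k - 1) j` has gap `j δ`, so one of its terms lies farther than `ε j δ = δ / 2`
from `X`, and the block around that term misses `X`. Hence at most `C` blocks meet `X`, and by
induction an interval of length `K ^ s` holds at most `C ^ s` points of `X`. Choosing `s` with
`K ^ (s - 1) ≤ n ≤ K ^ s` turns `C ^ s = C (K ^ (s - 1)) ^ (log C / log K)` into the bound.
-/

open Finset Real

lemma sum_range_le_pred_mul {k M : ℕ} {g : ℕ → ℕ} (hg : ∀ i, g i ≤ M)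
    (hzero : ∃ i < k, g i = 0) : ∑ i ∈ range k, g i ≤ (k - 1) * M := by
  obtain ⟨i, hik, hi⟩ := hzero
  rw [← sum_erase_add _ _ (mem_range.mpr hik), hi, add_zero]
  simpa [card_erase_of_mem (mem_range.mpr hik)] using
    sum_le_card_nsmul ((range k).erase i) g M fun t _ => hg t

lemma sum_range_mul_eq_sum_sum (g : ℕ → ℕ) (k j : ℕ) :
    ∑ t ∈ range (k * j), g t = ∑ i ∈ range k, ∑ r ∈ range j, g (i * j + r) := by
  induction k with
  | zero => simp
  | succ k ih => rw [add_one_mul, sum_range_add, ih, sum_range_succ]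

lemma sum_range_mul_le {k j M : ℕ} {g : ℕ → ℕ} (hg : ∀ t, g t ≤ M)
    (hzero : ∀ r < j, ∃ i < k, g (i * j + r) = 0) :
    ∑ t ∈ range (k * j), g t ≤ (k - 1) * j * M := by
  rw [sum_range_mul_eq_sum_sum, sum_comm]
  calc ∑ r ∈ range j, ∑ i ∈ range k, g (i * j + r)
      ≤ #(range j) • ((k - 1) * M) := sum_le_card_nsmul _ _ _ fun r hr =>
        sum_range_le_pred_mul (fun i => hg _) (hzero r (mem_range.mp hr))
    _ = (k - 1) * j * M := by rw [card_range, smul_eq_mul]; ring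

noncomputable def countIoc (X : Set ℕ) (a b : ℝ) : ℕ := (X ∩ Nat.cast ⁻¹' Set.Ioc a b).ncard

section countIoc

variable (X : Set ℕ) {a b c : ℝ}

lemma finite_inter_preimage_Ioc : (X ∩ Nat.cast ⁻¹' Set.Ioc a b).Finite :=
  (Set.finite_Iic ⌈b⌉₊).subset fun y hy => by exact_mod_cast hy.2.2.trans (Nat.le_ceil b)

lemma countIoc_mono_right (h : b ≤ c) : countIoc X a b ≤ countIoc X a c :=
  Set.ncard_le_ncard (Set.inter_subset_inter_right _ fun _ hy => ⟨hy.1, hy.2.trans h⟩)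
    (finite_inter_preimage_Ioc X)

lemma countIoc_le_add (hab : a ≤ b) (hbc : b ≤ c) :
    countIoc X a c ≤ countIoc X a b + countIoc X b c := by
  unfold countIoc
  rw [← Set.Ioc_union_Ioc_eq_Ioc hab hbc, Set.preimage_union, Set.inter_union_distrib_left]
  exact Set.ncard_union_le _ _

lemma countIoc_le_sum_range {δ : ℝ} (hδ : 0 ≤ δ) (K : ℕ) :
    countIoc X a (a + K * δ) ≤ ∑ t ∈ range K, countIoc X (a + t * δ) (a + t * δ + δ) := by
  induction K with
  | zero => simp [countIoc]
  | succ K ih =>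
    have hsplit := countIoc_le_add X (b := a + K * δ) (c := a + (K + 1 : ℕ) * δ)
      (le_add_of_nonneg_right (by positivity)) (by push_cast; linarith)
    push_cast at hsplit ⊢
    rw [add_one_mul, ← add_assoc] at hsplit ⊢
    rw [sum_range_succ]
    omega

lemma countIoc_le_one (h : b ≤ a + 1) : countIoc X a b ≤ 1 := by
  refine Set.ncard_le_one_iff (finite_inter_preimage_Ioc X) |>.mpr ?_
  rintro y z ⟨-, hya, hyb⟩ ⟨-, hza, hzb⟩
  have hyz : y < z + 1 := by exact_mod_cast (by linarith : (y : ℝ) < z + 1)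
  have hzy : z < y + 1 := by exact_mod_cast (by linarith : (z : ℝ) < y + 1)
  omega

lemma countIoc_eq_zero_of_lt_abs_sub {δ : ℝ} (h : ∀ y ∈ X, δ / 2 < |a + δ / 2 - y|) :
    countIoc X a (a + δ) = 0 := by
  refine Set.ncard_eq_zero (finite_inter_preimage_Ioc X) |>.mpr ?_
  refine Set.eq_empty_iff_forall_notMem.mpr ?_
  rintro y ⟨hyX, hya, hyb⟩
  have : |a + δ / 2 - y| ≤ δ / 2 := abs_le.mpr ⟨by linarith, by linarith⟩
  linarith [h y hyX]

lemma countIoc_natCast (m n : ℕ) :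
    countIoc X m n = (X ∩ Set.Icc (m + 1) n).ncard := by
  rw [countIoc, Set.Icc_add_one_left_eq_Ioc]
  congr 2
  ext
  simp

end countIoc

lemma countIoc_le_pow {X : Set ℕ} {k j : ℕ} {ε : ℝ}
    (hfar : ∀ x Δ : ℝ, 0 < Δ → ∃ i < k, ∀ y ∈ X, ε * Δ < |x + i * Δ - y|)
    (hεj : ε * j = 1 / 2) (hk : 0 < k) (hj : 0 < j) (s : ℕ) (a : ℝ) :
    countIoc X a (a + (k * j : ℝ) ^ s) ≤ ((k - 1) * j) ^ s := by
  induction s generalizing a with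
  | zero => simpa using countIoc_le_one X le_rfl
  | succ s ih =>
    set δ : ℝ := (k * j : ℝ) ^ s
    have hδ : 0 < δ := by positivity
    have hblock (r : ℕ) :
        ∃ i < k, countIoc X (a + (i * j + r : ℕ) * δ) (a + (i * j + r : ℕ) * δ + δ) = 0 := by
      obtain ⟨i, hik, hi⟩ := hfar (a + r * δ + δ / 2) (j * δ) (by positivity)
      refine ⟨i, hik, countIoc_eq_zero_of_lt_abs_sub X fun y hy => ?_⟩
      convert hi y hy using 2
      · linear_combination -δ * hεj
      · push_cast; ring
    calc countIoc X a (a + (k * j : ℝ) ^ (s + 1))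
        = countIoc X a (a + (k * j : ℕ) * δ) := by push_cast [pow_succ']; rfl
      _ ≤ ∑ t ∈ range (k * j), countIoc X (a + t * δ) (a + t * δ + δ) :=
        countIoc_le_sum_range X hδ.le _
      _ ≤ (k - 1) * j * ((k - 1) * j) ^ s := sum_range_mul_le (fun t => ih _) fun r _ => hblock r
      _ = ((k - 1) * j) ^ (s + 1) := by ring

lemma pow_succ_le_mul_rpow_log_div_log {K C x : ℝ} {s : ℕ} (hK : 1 < K) (hC : 1 ≤ C)
    (hx : K ^ s ≤ x) : C ^ (s + 1) ≤ C * x ^ (log C / log K) := by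
  have hlog : (K ^ s) ^ (log C / log K) = C ^ s := by
    rw [← rpow_natCast, ← rpow_mul (by positivity), mul_comm, rpow_mul (by positivity),
      ← logb, rpow_logb (by positivity) hK.ne' (by positivity), rpow_natCast]
  rw [pow_succ']
  gcongr
  rw [← hlog]
  gcongr
  exact div_nonneg (log_nonneg hC) (log_pos hK).le

lemma lt_abs_sub_of_lt_sInf {X : Set ℕ} {z b : ℝ}
    (h : b < sInf {d : ℝ | ∃ y ∈ X, d = |z - y|}) : ∀ y ∈ X, b < |z - y| := fun y hy =>
  h.trans_le (csInf_le ⟨0, by rintro _ ⟨_, _, rfl⟩; exact abs_nonneg _⟩ ⟨y, hy, rfl⟩)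

theorem count_bound_of_avoiding_APs_general (X : Set ℕ)
    (k : ℕ) (hk : 2 ≤ k) (ε : ℝ) (hε : 0 < ε)
    (hint : ∃ j : ℕ, 0 < j ∧ (j : ℝ) = 1 / (2 * ε))
    (havoid : ∀ x Δ : ℝ, 0 < Δ → ∃ i : ℕ, i < k ∧
      sInf {d : ℝ | ∃ y ∈ X, d = |x + i * Δ - (y : ℝ)|} > ε * Δ) :
    ∀ m n : ℕ, 2 ≤ n →
      ((X ∩ Set.Icc (m + 1) (m + n)).ncard : ℝ) ≤
        ((k - 1) / (2 * ε)) *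
          (n : ℝ) ^ (Real.log ((k - 1) / (2 * ε)) / Real.log (k / (2 * ε))) := by
  intro m n hn
  obtain ⟨j, hj, hjε⟩ := hint
  have hεj : ε * j = 1 / 2 := by rw [hjε]; field_simp
  have hfar : ∀ x Δ : ℝ, 0 < Δ → ∃ i < k, ∀ y ∈ X, ε * Δ < |x + i * Δ - y| := fun x Δ hΔ =>
    (havoid x Δ hΔ).imp fun _ hi => ⟨hi.1, lt_abs_sub_of_lt_sInf hi.2⟩
  have hK : 1 < k * j := by nlinarith
  set s := Nat.log (k * j) n
  have hcount : (X ∩ Set.Icc (m + 1) (m + n)).ncard ≤ ((k - 1) * j) ^ (s + 1) := calc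
    _ = countIoc X m (m + n) := by rw [← Nat.cast_add, countIoc_natCast]
    _ ≤ countIoc X m (m + (k * j : ℝ) ^ (s + 1)) := countIoc_mono_right X <| by
      gcongr
      exact_mod_cast (Nat.lt_pow_succ_log_self hK n).le
    _ ≤ _ := countIoc_le_pow hfar hεj (by omega) hj (s + 1) m
  rw [div_eq_mul_one_div, div_eq_mul_one_div (k : ℝ), ← hjε]
  calc _ ≤ (((k - 1) * j : ℕ) : ℝ) ^ (s + 1) := by exact_mod_cast hcount
    _ ≤ _ := by
      push_cast [Nat.cast_sub (by omega : 1 ≤ k)]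
      refine pow_succ_le_mul_rpow_log_div_log (by exact_mod_cast hK) ?_ ?_
      · have hk' : (2 : ℝ) ≤ k := by exact_mod_cast hk
        exact one_le_mul_of_one_le_of_one_le (by linarith) (by exact_mod_cast hj)
      · exact_mod_cast Nat.pow_log_le_self _ (by omega)

/-- If X stays ε-far (relative to the gap) from every arithmetic progression of
length k, then the counting function obeys a polynomial bound. -/
theorem count_bound_of_avoiding_APs (X : Set ℕ) (hX : ∀ x ∈ X, 0 < x)
    (k : ℕ) (hk : 2 ≤ k) (ε : ℝ) (hε : 0 < ε)
    (hint : ∃ j : ℕ, 0 < j ∧ (j : ℝ) = 1 / (2 * ε))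
    (havoid : ∀ x Δ : ℝ, 0 < Δ → ∃ i : ℕ, i < k ∧
      sInf {d : ℝ | ∃ y ∈ X, d = |x + i * Δ - (y : ℝ)|} > ε * Δ) :
    ∀ m n : ℕ, 2 ≤ n →
      ((X ∩ Set.Icc (m + 1) (m + n)).ncard : ℝ) ≤
        ((k - 1) / (2 * ε)) *
          (n : ℝ) ^ (Real.log ((k - 1) / (2 * ε)) / Real.log (k / (2 * ε))) :=
  count_bound_of_avoiding_APs_general X k hk ε hε hint havoid
end

section
/- The primes get arbitrarily close to arbitrarily long arithmetic progressions: for all k ∈ ℕ and ε > 0 there exists an arithmetic progression P ⊆ ℝ of length k and gap size Δ > 0 such that sup_{p ∈ P} inf_{q prime} |p − q| ≤ εΔ. -/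
open Finset Set

open scoped Classical in
/-- The finite set of primes in the real window `[M, M+L]`. -/
noncomputable def pwin (M L : ℝ) : Finset ℕ :=
  (Finset.range (⌈M + L⌉₊ + 1)).filter fun q => q.Prime ∧ M ≤ (q : ℝ) ∧ (q : ℝ) ≤ M + L

lemma mem_pwin {q : ℕ} {M L : ℝ} :
    q ∈ pwin M L ↔ q.Prime ∧ M ≤ (q : ℝ) ∧ (q : ℝ) ≤ M + L := by
  classical
  constructor
  · intro h
    simpa [pwin] using (Finset.mem_filter.mp h).2
  · intro h
    refine Finset.mem_filter.mpr ⟨Finset.mem_range.mpr ?_, by simpa [pwin] using h⟩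
    have h1 : (q : ℝ) ≤ (⌈M + L⌉₊ : ℝ) := h.2.2.trans (Nat.le_ceil _)
    have : q ≤ ⌈M + L⌉₊ := by exact_mod_cast h1
    omega

lemma pwin_card (M L : ℝ) (hL : 0 ≤ L) : ((pwin M L).card : ℝ) ≤ L + 2 := by
  have hsub : pwin M L ⊆ Finset.Icc ⌈M⌉₊ (⌈M⌉₊ + ⌊L⌋₊ + 1) := by
    intro q hq
    obtain ⟨hp, h1, h2⟩ := mem_pwin.mp hq
    refine Finset.mem_Icc.mpr ⟨Nat.ceil_le.mpr h1, ?_⟩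
    have hr : (q : ℝ) ≤ (⌈M⌉₊ : ℝ) + ((⌊L⌋₊ : ℝ) + 1) :=
      h2.trans (add_le_add (Nat.le_ceil M) (le_of_lt (Nat.lt_floor_add_one L)))
    have hr2 : (q : ℝ) ≤ ((⌈M⌉₊ + ⌊L⌋₊ + 1 : ℕ) : ℝ) := by push_cast; linarith
    exact_mod_cast hr2
  have hcard : (pwin M L).card ≤ ⌊L⌋₊ + 2 := by
    have := Finset.card_le_card hsub
    rwa [Nat.card_Icc, show ⌈M⌉₊ + ⌊L⌋₊ + 1 + 1 - ⌈M⌉₊ = ⌊L⌋₊ + 2 by omega] at this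
  have hc : ((pwin M L).card : ℝ) ≤ ((⌊L⌋₊ + 2 : ℕ) : ℝ) := by exact_mod_cast hcard
  have hfl : (⌊L⌋₊ : ℝ) ≤ L := Nat.floor_le hL
  push_cast at hc
  linarith

lemma pwin_count (δ : ℝ) (h0 : 0 < δ) (h1 : δ < 1)
    (Bad : ∀ M L : ℝ, 0 < L → ∃ t, M ≤ t ∧ t ≤ M + L ∧
      ∀ q : ℕ, q.Prime → δ * L < |t - (q : ℝ)|) :
    ∀ n : ℕ, ∀ M L : ℝ, 0 ≤ L →
      ((pwin M L).card : ℝ) ≤ (1 - δ) ^ n * L + 2 * 2 ^ n := by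
  have hrpos : (0:ℝ) < 1 - δ := by linarith
  intro n
  induction n with
  | zero => intro M L hL; simpa using pwin_card M L hL
  | succ n ih =>
    intro M L hL
    have hpownn : (0:ℝ) ≤ (1 - δ) ^ n := le_of_lt (pow_pos hrpos n)
    have h2n : (1:ℝ) ≤ 2 ^ (n+1) := one_le_pow₀ (by norm_num)
    rcases eq_or_lt_of_le hL with hL0 | hL0
    · have hc := pwin_card M L hL
      have hpow : (0:ℝ) ≤ (1 - δ) ^ (n + 1) * L := by
        rw [← hL0]; simp
      linarith
    · obtain ⟨t, ht1, ht2, ht⟩ := Bad M L hL0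
      set L1 : ℝ := max (t - δ * L - M) 0 with hL1def
      set L2 : ℝ := max (M + L - (t + δ * L)) 0 with hL2def
      have hδL : 0 < δ * L := mul_pos h0 hL0
      have hmax1 : t - δ * L - M ≤ L1 := le_max_left _ _
      have hmax2 : M + L - (t + δ * L) ≤ L2 := le_max_left _ _
      have hsub : pwin M L ⊆ pwin M L1 ∪ pwin (t + δ * L) L2 := by
        intro q hq
        obtain ⟨hp, hq1, hq2⟩ := mem_pwin.mp hq
        have habs := ht q hp
        rcases lt_or_ge (q : ℝ) t with hqt | hqt
        · have hlt : δ * L < t - q := by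
            rw [abs_of_pos (by linarith)] at habs; linarith
          exact Finset.mem_union_left _ (mem_pwin.mpr ⟨hp, hq1, by linarith⟩)
        · have hlt : δ * L < q - t := by
            rw [abs_of_nonpos (by linarith)] at habs; linarith
          exact Finset.mem_union_right _ (mem_pwin.mpr ⟨hp, by linarith, by linarith⟩)
      have hL1 : 0 ≤ L1 := le_max_right _ _
      have hL2 : 0 ≤ L2 := le_max_right _ _
      have hsum : L1 + L2 ≤ (1 - δ) * L := by
        rcases max_cases (t - δ * L - M) 0 with ⟨e1, _⟩ | ⟨e1, _⟩ <;>
          rcases max_cases (M + L - (t + δ * L)) 0 with ⟨e2, _⟩ | ⟨e2, _⟩ <;>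
          rw [hL1def, hL2def, e1, e2] <;> nlinarith
      have hcard : ((pwin M L).card : ℝ)
          ≤ ((pwin M L1).card : ℝ) + ((pwin (t + δ * L) L2).card : ℝ) := by
        have := (Finset.card_le_card hsub).trans (Finset.card_union_le _ _)
        exact_mod_cast this
      have ih1 := ih M L1 hL1
      have ih2 := ih (t + δ * L) L2 hL2
      have hmul : (1 - δ) ^ n * (L1 + L2) ≤ (1 - δ) ^ n * ((1 - δ) * L) :=
        mul_le_mul_of_nonneg_left hsum hpownn
      have hring : (1 - δ) ^ n * ((1 - δ) * L) = (1 - δ) ^ (n + 1) * L := by ring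
      have hpow2 : (2:ℝ) * 2 ^ n + 2 * 2 ^ n = 2 * 2 ^ (n + 1) := by ring
      nlinarith [hmul, hring, hcard, ih1, ih2]

lemma key_s10 (δ : ℝ) (h0 : 0 < δ) (h1 : δ < 1) :
    ∃ M L : ℝ, 0 < L ∧ ∀ t, M ≤ t → t ≤ M + L →
      ∃ q : ℕ, q.Prime ∧ |t - (q : ℝ)| ≤ δ * L := by
  by_contra hcon
  push_neg at hcon
  have Bad : ∀ M L : ℝ, 0 < L → ∃ t, M ≤ t ∧ t ≤ M + L ∧
      ∀ q : ℕ, q.Prime → δ * L < |t - (q : ℝ)| := by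
    intro M L hL
    obtain ⟨t, ht1, ht2, ht⟩ := hcon M L hL
    exact ⟨t, ht1, ht2, fun q hq => ht q hq⟩
  have hrpos : (0:ℝ) < 1 - δ := by linarith
  obtain ⟨R, hRdef⟩ : ∃ R : ℝ, R = 2 / (1 - δ) := ⟨_, rfl⟩
  have hR2 : (2:ℝ) < R ∨ (2:ℝ) ≤ R := by
    right
    rw [hRdef, le_div_iff₀ hrpos]; nlinarith
  have hRge2 : (2:ℝ) ≤ R := hR2.elim le_of_lt id
  have hR1 : (1:ℝ) < R := by linarith
  have hRpos : (0:ℝ) < R := by linarith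
  have hrR : (1 - δ) * R = 2 := by
    rw [hRdef]; field_simp
  have h2R : 2 / R = 1 - δ := by
    rw [hRdef]; field_simp
  -- counting bound: primes up to R^m are at most 3 * 2^m
  have hcount : ∀ m : ℕ, ((pwin 0 (R ^ m)).card : ℝ) ≤ 3 * 2 ^ m := by
    intro m
    have := pwin_count δ h0 h1 Bad m 0 (R ^ m) (le_of_lt (pow_pos hRpos m))
    have hpowmul : (1 - δ) ^ m * R ^ m = 2 ^ m := by
      rw [← mul_pow, hrR]
    linarith
  -- partial sums of prime reciprocals are bounded
  set T : ℕ → ℝ := fun m => ∑ q ∈ pwin 0 (R ^ m), (1 : ℝ) / q with hTdef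
  have hmono : ∀ m : ℕ, pwin 0 (R ^ m) ⊆ pwin 0 (R ^ (m + 1)) := by
    intro m q hq
    obtain ⟨hp, hq1, hq2⟩ := mem_pwin.mp hq
    refine mem_pwin.mpr ⟨hp, hq1, hq2.trans ?_⟩
    have hpw : R ^ m ≤ R ^ (m + 1) := pow_le_pow_right₀ (le_of_lt hR1) (by omega)
    linarith
  have hTstep : ∀ m : ℕ, T (m + 1) ≤ T m + 6 * (1 - δ) ^ m := by
    intro m
    have hsplit := Finset.sum_sdiff (f := fun q : ℕ => (1:ℝ)/q) (hmono m)
    have hdiff : ∑ q ∈ pwin 0 (R ^ (m+1)) \ pwin 0 (R ^ m), (1:ℝ)/q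
        ≤ 6 * (1 - δ) ^ m := by
      have hRm : (0:ℝ) < R ^ m := pow_pos hRpos m
      have hbound : ∀ q ∈ pwin 0 (R ^ (m+1)) \ pwin 0 (R ^ m), (1:ℝ)/q ≤ (R ^ m)⁻¹ := by
        intro q hq
        obtain ⟨hin, hout⟩ := Finset.mem_sdiff.mp hq
        obtain ⟨hp, hq1, hq2⟩ := mem_pwin.mp hin
        have hgt : R ^ m < (q : ℝ) := by
          by_contra hle
          exact hout (mem_pwin.mpr ⟨hp, hq1, by push_neg at hle; linarith⟩)
        rw [one_div]
        exact inv_anti₀ hRm (le_of_lt hgt)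
      have hcard2 : ((pwin 0 (R ^ (m+1)) \ pwin 0 (R ^ m)).card : ℝ) ≤ 3 * 2 ^ (m+1) := by
        have hle : (pwin 0 (R ^ (m+1)) \ pwin 0 (R ^ m)).card ≤ (pwin 0 (R ^ (m+1))).card :=
          Finset.card_le_card (Finset.sdiff_subset)
        calc ((pwin 0 (R ^ (m+1)) \ pwin 0 (R ^ m)).card : ℝ)
            ≤ ((pwin 0 (R ^ (m+1))).card : ℝ) := by exact_mod_cast hle
          _ ≤ 3 * 2 ^ (m+1) := hcount (m+1)
      calc ∑ q ∈ pwin 0 (R ^ (m+1)) \ pwin 0 (R ^ m), (1:ℝ)/q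
          ≤ ∑ _q ∈ pwin 0 (R ^ (m+1)) \ pwin 0 (R ^ m), (R ^ m)⁻¹ :=
            Finset.sum_le_sum hbound
        _ = ((pwin 0 (R ^ (m+1)) \ pwin 0 (R ^ m)).card : ℝ) * (R ^ m)⁻¹ := by
            rw [Finset.sum_const, nsmul_eq_mul]
        _ ≤ 3 * 2 ^ (m+1) * (R ^ m)⁻¹ := by
            apply mul_le_mul_of_nonneg_right hcard2 (by positivity)
        _ = 6 * (2 / R) ^ m := by
            rw [div_pow, div_eq_mul_inv (2 ^ m : ℝ)]; ring
        _ = 6 * (1 - δ) ^ m := by rw [h2R]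
    have : T (m+1) = (∑ q ∈ pwin 0 (R ^ (m+1)) \ pwin 0 (R ^ m), (1:ℝ)/q) + T m := by
      rw [hTdef]; exact hsplit.symm
    linarith
  have hTbound : ∀ m : ℕ, T m ≤ 6 * (1 - (1 - δ))⁻¹ := by
    have hgeom : ∀ m : ℕ, ∑ j ∈ Finset.range m, (1 - δ) ^ j ≤ (1 - (1 - δ))⁻¹ := by
      intro m
      exact Summable.sum_le_tsum (Finset.range m) (fun i _ => by positivity)
        (summable_geometric_of_lt_one (le_of_lt hrpos) (by linarith)) |>.trans_eq
        (tsum_geometric_of_lt_one (le_of_lt hrpos) (by linarith))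
    have hT0 : T 0 = 0 := by
      rw [hTdef]
      apply Finset.sum_eq_zero
      intro q hq
      obtain ⟨hp, hq1, hq2⟩ := mem_pwin.mp hq
      exfalso
      have : (2:ℝ) ≤ (q:ℝ) := by exact_mod_cast hp.two_le
      simp only [pow_zero] at hq2
      linarith
    have hTm : ∀ m : ℕ, T m ≤ 6 * ∑ j ∈ Finset.range m, (1 - δ) ^ j := by
      intro m
      induction m with
      | zero => simp [hT0]
      | succ m ihm =>
        have := hTstep m
        rw [Finset.sum_range_succ]
        linarith
    intro m
    have := hTm m
    have h6 := hgeom m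
    linarith
  -- summability of prime reciprocals
  have hsummable : Summable (Set.indicator {p : ℕ | p.Prime} (fun n : ℕ => (1 : ℝ) / n)) := by
    apply summable_of_sum_range_le (c := 6 * (1 - (1 - δ))⁻¹)
    · intro n
      by_cases hn : n ∈ {p : ℕ | p.Prime}
      · rw [Set.indicator_of_mem hn]; positivity
      · rw [Set.indicator_of_notMem hn]
    · intro N
      obtain ⟨m, hm⟩ := pow_unbounded_of_one_lt (N : ℝ) hR1
      have hsub2 : (Finset.range N).filter (fun q => q.Prime) ⊆ pwin 0 (R ^ m) := by
        intro q hq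
        obtain ⟨hqN, hp⟩ := Finset.mem_filter.mp hq
        refine mem_pwin.mpr ⟨hp, by positivity, ?_⟩
        have : (q : ℝ) < (N : ℝ) := by exact_mod_cast Finset.mem_range.mp hqN
        linarith
      classical
      have heq : ∑ i ∈ Finset.range N,
          Set.indicator {p : ℕ | p.Prime} (fun n : ℕ => (1 : ℝ) / n) i
          = ∑ q ∈ (Finset.range N).filter (fun q => q.Prime), (1:ℝ)/q := by
        rw [Finset.sum_filter]
        apply Finset.sum_congr rfl
        intro i _
        by_cases hi : i.Prime
        · rw [Set.indicator_of_mem (by exact hi), if_pos hi]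
        · rw [Set.indicator_of_notMem (by exact hi), if_neg hi]
      rw [heq]
      calc ∑ q ∈ (Finset.range N).filter (fun q => q.Prime), (1:ℝ)/q
          ≤ ∑ q ∈ pwin 0 (R ^ m), (1:ℝ)/q := by
            apply Finset.sum_le_sum_of_subset_of_nonneg hsub2
            intro i _ _; positivity
        _ ≤ 6 * (1 - (1 - δ))⁻¹ := hTbound m
  exact not_summable_one_div_on_primes hsummable

/-- The primes get arbitrarily close to arbitrarily long arithmetic progressions. -/
theorem primes_closeToAPs :
    ∀ k : ℕ, ∀ ε : ℝ, 0 < ε → ∃ x Δ : ℝ, 0 < Δ ∧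
      ∀ i : ℕ, i < k →
        sInf {d : ℝ | ∃ q : ℕ, q.Prime ∧ d = |x + i * Δ - (q : ℝ)|} ≤ ε * Δ := by
  intro k ε hε
  rcases Nat.eq_zero_or_pos k with hk | hk
  · exact ⟨0, 1, one_pos, fun i hi => by omega⟩
  have hkR : (0:ℝ) < (k : ℝ) := by exact_mod_cast hk
  set δ : ℝ := min (ε / k) (1/2) with hδdef
  have hδ0 : 0 < δ := lt_min (div_pos hε hkR) (by norm_num)
  have hδ1 : δ < 1 := lt_of_le_of_lt (min_le_right _ _) (by norm_num)
  obtain ⟨M, L, hL, hGood⟩ := key_s10 δ hδ0 hδ1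
  refine ⟨M, L / k, div_pos hL hkR, ?_⟩
  intro i hi
  have hiL : (i : ℝ) * (L / k) ≤ L := by
    have hik : (i : ℝ) ≤ (k : ℝ) := by exact_mod_cast le_of_lt hi
    calc (i : ℝ) * (L / k) ≤ (k : ℝ) * (L / k) :=
          mul_le_mul_of_nonneg_right hik (le_of_lt (div_pos hL hkR))
      _ = L := by field_simp
  have ht1 : M ≤ M + i * (L / k) := by
    have : (0:ℝ) ≤ (i : ℝ) * (L / k) := by positivity
    linarith
  obtain ⟨q, hq, hqd⟩ := hGood (M + i * (L / k)) ht1 (by linarith)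
  have hbdd : BddBelow {d : ℝ | ∃ q : ℕ, q.Prime ∧ d = |M + i * (L / k) - (q : ℝ)|} := by
    refine ⟨0, fun d hd => ?_⟩
    obtain ⟨p, _, hdp⟩ := hd
    rw [hdp]; exact abs_nonneg _
  have hmem : |M + i * (L / k) - (q : ℝ)| ∈
      {d : ℝ | ∃ q : ℕ, q.Prime ∧ d = |M + i * (L / k) - (q : ℝ)|} := ⟨q, hq, rfl⟩
  calc sInf {d : ℝ | ∃ q : ℕ, q.Prime ∧ d = |M + i * (L / k) - (q : ℝ)|}
      ≤ |M + i * (L / k) - (q : ℝ)| := csInf_le hbdd hmem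
    _ ≤ δ * L := hqd
    _ ≤ (ε / k) * L := mul_le_mul_of_nonneg_right (min_le_left _ _) (le_of_lt hL)
    _ = ε * (L / k) := by ring
end

section
/- If X ⊆ ℤ⁺ satisfies ∑_{x ∈ X} 1/x = ∞, then X gets arbitrarily close to arbitrarily long arithmetic progressions: for all k ∈ ℕ and ε > 0 there exists an arithmetic progression P of length k and gap Δ > 0 such that sup_{p ∈ P} inf_{x ∈ X} |p − x| ≤ εΔ. -/
/-!
Suppose `X` stays `ε Δ`-far from some term of every progression of length `k + 1` and gap `Δ`.
Take `r ≥ 1 / ε` and `s = (k + 1) r`, and cut an interval of length `s ^ (t + 1)` into `s` blocks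
of length `s ^ t`. For each residue `u` mod `r`, the progression through the left ends of the blocks
`u, u + r, …, u + k r` has gap `r s ^ t ≥ s ^ t / ε`, so one of these blocks misses `X`. Hence at
most `k r` blocks meet `X`, and by induction an interval of length `s ^ t` contains at most
`(k r) ^ t` elements of `X`. The elements of `X` in `[s ^ T, s ^ (T + 1))` then contribute at most
`k r (k / (k + 1)) ^ T` to `∑ 1 / x`, a convergent geometric series.
-/

open Finset

def FarFromAPs (X : Set ℕ) (K : ℕ) (ε : ℝ) : Prop :=
  ∀ x Δ : ℝ, 0 < Δ → ∃ i < K, ∀ y ∈ X, ε * Δ < |x + i * Δ - y|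

theorem sInf_abs_sub_le {X : Set ℕ} (p : ℝ) {y : ℕ} (hy : y ∈ X) :
    sInf {d : ℝ | ∃ y ∈ X, d = |p - y|} ≤ |p - y| :=
  csInf_le ⟨0, by rintro d ⟨z, -, rfl⟩; exact abs_nonneg _⟩ ⟨y, hy, rfl⟩

theorem card_le_of_forall_exists_notMem {k r : ℕ} {S : Finset ℕ} (hS : S ⊆ range ((k + 1) * r))
    (hmiss : ∀ u < r, ∃ i < k + 1, u + r * i ∉ S) : #S ≤ k * r := by
  choose! i hi hiS using hmiss
  set T := (range r).image fun u => u + r * i u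
  have hT : T ⊆ range ((k + 1) * r) := by
    simp only [T, image_subset_iff, mem_range]
    intro u hu
    nlinarith [hi u hu]
  have hTcard : #T = r := by
    rw [card_image_of_injOn, card_range]
    intro u hu v hv huv
    simp only [coe_range, Set.mem_Iio] at hu hv
    simpa [Nat.add_mul_mod_self_left, Nat.mod_eq_of_lt hu, Nat.mod_eq_of_lt hv] using
      congrArg (· % r) huv
  have hST : S ⊆ range ((k + 1) * r) \ T := by
    intro c hc
    refine mem_sdiff.2 ⟨hS hc, fun hcT => ?_⟩
    obtain ⟨u, hu, rfl⟩ := mem_image.1 hcT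
    exact hiS u (mem_range.1 hu) hc
  calc #S ≤ #(range ((k + 1) * r) \ T) := card_le_card hST
    _ = k * r := by rw [card_sdiff_of_subset hT, card_range, hTcard, add_mul, one_mul,
        Nat.add_sub_cancel]

theorem card_filter_Ico_le_sum_blocks (P : ℕ → Prop) [DecidablePred P] (a m : ℕ) {q : ℕ}
    (hq : 0 < q) :
    #{n ∈ Ico a (a + m * q) | P n} ≤
      ∑ c ∈ range m, #{n ∈ Ico (a + c * q) (a + c * q + q) | P n} := by
  have hmaps : Set.MapsTo (fun n => (n - a) / q) ({n ∈ Ico a (a + m * q) | P n} : Finset ℕ)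
      (range m) := by
    intro n hn
    simp only [coe_filter, mem_Ico, Set.mem_ofPred_eq] at hn
    exact mem_range.2 ((Nat.div_lt_iff_lt_mul hq).2 (by omega))
  rw [card_eq_sum_card_fiberwise hmaps]
  refine sum_le_sum fun c _ => card_le_card fun n hn => ?_
  simp only [mem_filter, mem_Ico] at hn ⊢
  obtain ⟨⟨⟨hn₁, -⟩, hP⟩, rfl⟩ := hn
  have h₁ := Nat.div_mul_le_self (n - a) q
  have h₂ := Nat.lt_div_mul_add (a := n - a) hq
  exact ⟨⟨by omega, by omega⟩, hP⟩

theorem pos_of_one_le_mul_natCast {ε : ℝ} {r : ℕ} (h : 1 ≤ ε * r) : 0 < r :=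
  Nat.pos_of_ne_zero <| Nat.cast_ne_zero.1 <| right_ne_zero_of_mul (one_pos.trans_le h).ne'

namespace FarFromAPs

variable {X : Set ℕ} {k r : ℕ} {ε : ℝ}

theorem exists_block_notMem (hX : FarFromAPs X (k + 1) ε) (hεr : 1 ≤ ε * r) (a u : ℕ) {q : ℕ}
    (hq : 0 < q) :
    ∃ i < k + 1, ∀ n ∈ Ico (a + (u + r * i) * q) (a + (u + r * i) * q + q), n ∉ X := by
  have hΔ : (0 : ℝ) < r * q := by have := pos_of_one_le_mul_natCast hεr; positivity
  obtain ⟨i, hi, hfar⟩ := hX (a + u * q) (r * q) hΔ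
  refine ⟨i, hi, fun n hn hnX => ?_⟩
  have hn' : ((a + (u + r * i) * q : ℕ) : ℝ) ≤ n ∧ (n : ℝ) < (a + (u + r * i) * q + q : ℕ) := by
    simp only [mem_Ico] at hn
    exact ⟨by exact_mod_cast hn.1, by exact_mod_cast hn.2⟩
  push_cast at hn'
  have hclose : |a + u * q + i * (r * q) - (n : ℝ)| < q := by
    rw [abs_lt]
    constructor <;> nlinarith
  have hq' : (q : ℝ) ≤ ε * (r * q) := by
    calc (q : ℝ) = 1 * q := (one_mul _).symm
      _ ≤ ε * r * q := by gcongr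
      _ = ε * (r * q) := mul_assoc _ _ _
  linarith [hfar n hnX]

theorem card_filter_Ico_pow_le [DecidablePred (· ∈ X)] (hX : FarFromAPs X (k + 1) ε)
    (hεr : 1 ≤ ε * r) (t a : ℕ) :
    #{n ∈ Ico a (a + ((k + 1) * r) ^ t) | n ∈ X} ≤ (k * r) ^ t := by
  induction t generalizing a with
  | zero => simpa using card_filter_le (Ico a (a + 1)) (· ∈ X)
  | succ t ih =>
    set s := (k + 1) * r
    set g := fun c => #{n ∈ Ico (a + c * s ^ t) (a + c * s ^ t + s ^ t) | n ∈ X}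
    have hq : 0 < s ^ t := by have := pos_of_one_le_mul_natCast hεr; positivity
    have hocc : #{c ∈ range s | g c ≠ 0} ≤ k * r := by
      refine card_le_of_forall_exists_notMem (filter_subset _ _) fun u _ => ?_
      obtain ⟨i, hi, hempty⟩ := hX.exists_block_notMem hεr a u hq
      exact ⟨i, hi, fun h => (mem_filter.1 h).2 (card_eq_zero.2 (filter_eq_empty_iff.2 hempty))⟩
    calc #{n ∈ Ico a (a + s ^ (t + 1)) | n ∈ X} ≤ ∑ c ∈ range s, g c := by
          rw [pow_succ']
          exact card_filter_Ico_le_sum_blocks _ a s hq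
      _ = ∑ c ∈ range s with g c ≠ 0, g c := (sum_filter_ne_zero _).symm
      _ ≤ #{c ∈ range s | g c ≠ 0} * (k * r) ^ t := by
          simpa using sum_le_card_nsmul _ _ _ fun c _ => ih (a + c * s ^ t)
      _ ≤ k * r * (k * r) ^ t := Nat.mul_le_mul_right _ hocc
      _ = (k * r) ^ (t + 1) := (pow_succ' _ _).symm

end FarFromAPs

theorem summable_one_div_of_card_filter_range_pow_le {X : Set ℕ} [DecidablePred (· ∈ X)]
    {s M : ℕ} (hs : 1 < s) (hM : M < s) (hX : ∀ t, #{n ∈ range (s ^ t) | n ∈ X} ≤ M ^ t) :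
    Summable (fun x : X => (1 : ℝ) / (x : ℕ)) := by
  set F := X.indicator fun n : ℕ => (1 : ℝ) / n
  have hF : ∀ n, 0 ≤ F n := fun n => Set.indicator_nonneg (fun _ _ => by positivity) n
  set ρ : ℝ := M / s
  have hρ0 : 0 ≤ ρ := by positivity
  have hρ1 : ρ < 1 := (div_lt_one (by positivity)).2 (by exact_mod_cast hM)
  have hshell : ∀ T, ∑ n ∈ Ico (s ^ T) (s ^ (T + 1)), F n ≤ M * ρ ^ T := by
    intro T
    have hsT : (0 : ℝ) < s ^ T := by positivity
    calc ∑ n ∈ Ico (s ^ T) (s ^ (T + 1)), F n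
        = ∑ n ∈ Ico (s ^ T) (s ^ (T + 1)) with n ∈ X, (1 : ℝ) / n := by
          simp only [F, Set.indicator_apply, sum_filter]
      _ ≤ #{n ∈ Ico (s ^ T) (s ^ (T + 1)) | n ∈ X} • (1 / (s : ℝ) ^ T) := by
          refine sum_le_card_nsmul _ _ _ fun n hn => one_div_le_one_div_of_le hsT ?_
          exact_mod_cast (mem_Ico.1 (mem_filter.1 hn).1).1
      _ ≤ (M : ℝ) ^ (T + 1) * (1 / (s : ℝ) ^ T) := by
          rw [nsmul_eq_mul]
          gcongr
          have hsub : Ico (s ^ T) (s ^ (T + 1)) ⊆ range (s ^ (T + 1)) := by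
            rw [range_eq_Ico]
            exact Ico_subset_Ico_left (Nat.zero_le _)
          exact_mod_cast (card_le_card (filter_subset_filter _ hsub)).trans (hX (T + 1))
      _ = M * ρ ^ T := by rw [div_pow]; field_simp; ring
  have hpartial : ∀ N, ∑ n ∈ range (s ^ N), F n ≤ ∑ T ∈ range N, M * ρ ^ T := by
    intro N
    induction N with
    | zero => simp [F, Set.indicator_apply]
    | succ N ih =>
      rw [← sum_range_add_sum_Ico _ (Nat.pow_le_pow_right hs.le N.le_succ), sum_range_succ]
      exact add_le_add ih (hshell N)
  have hgeom : ∀ N, ∑ T ∈ range N, (M : ℝ) * ρ ^ T ≤ M * (1 - ρ)⁻¹ := by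
    intro N
    rw [← mul_sum, range_eq_Ico]
    gcongr
    simpa using geom_sum_Ico_le_of_lt_one (m := 0) (n := N) hρ0 hρ1
  refine summable_subtype_iff_indicator.2
    (summable_of_sum_range_le (c := M * (1 - ρ)⁻¹) hF fun N => ?_)
  calc ∑ n ∈ range N, F n ≤ ∑ n ∈ range (s ^ N), F n :=
        sum_le_sum_of_subset_of_nonneg (range_subset_range.2 (Nat.lt_pow_self hs).le)
          fun n _ _ => hF n
    _ ≤ M * (1 - ρ)⁻¹ := (hpartial N).trans (hgeom N)

theorem closeToAPs_of_divergence_general (X : Set ℕ)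
    (hdiv : ¬ Summable (fun x : X => (1 : ℝ) / (x : ℕ))) :
    ∀ k : ℕ, ∀ ε : ℝ, 0 < ε → ∃ x Δ : ℝ, 0 < Δ ∧
      ∀ i : ℕ, i < k →
        sInf {d : ℝ | ∃ y ∈ X, d = |x + i * Δ - (y : ℝ)|} ≤ ε * Δ := by
  classical
  intro k ε hε
  -- Length `k + 2` makes the scale `s = (k + 2) r` of the counting argument at least `2`.
  suffices h : ∃ x Δ : ℝ, 0 < Δ ∧ ∀ i < k + 2,
      sInf {d : ℝ | ∃ y ∈ X, d = |x + i * Δ - (y : ℝ)|} ≤ ε * Δ by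
    obtain ⟨x, Δ, hΔ, hAP⟩ := h
    exact ⟨x, Δ, hΔ, fun i hi => hAP i (by omega)⟩
  by_contra! hclose
  have hfar : FarFromAPs X (k + 1 + 1) ε := fun x Δ hΔ => by
    obtain ⟨i, hi, hlt⟩ := hclose x Δ hΔ
    exact ⟨i, hi, fun y hy => hlt.trans_le (sInf_abs_sub_le _ hy)⟩
  set r := ⌈1 / ε⌉₊
  have hr : 0 < r := Nat.ceil_pos.2 (by positivity)
  have hεr : 1 ≤ ε * r := by
    calc (1 : ℝ) = ε * (1 / ε) := by field_simp
      _ ≤ ε * r := by gcongr; exact Nat.le_ceil _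
  refine hdiv (summable_one_div_of_card_filter_range_pow_le (s := (k + 2) * r)
    (M := (k + 1) * r) (by nlinarith) (by nlinarith) fun t => ?_)
  simpa using hfar.card_filter_Ico_pow_le hεr t 0

/-- If the reciprocal sum of X diverges, then X gets arbitrarily close to
arbitrarily long arithmetic progressions. -/
theorem closeToAPs_of_divergence (X : Set ℕ) (hX : ∀ x ∈ X, 0 < x)
    (hdiv : ¬ Summable (fun x : X => (1 : ℝ) / (x : ℕ))) :
    ∀ k : ℕ, ∀ ε : ℝ, 0 < ε → ∃ x Δ : ℝ, 0 < Δ ∧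
      ∀ i : ℕ, i < k →
        sInf {d : ℝ | ∃ y ∈ X, d = |x + i * Δ - (y : ℝ)|} ≤ ε * Δ :=
  closeToAPs_of_divergence_general X hdiv
end

section
/- The set of positive integer powers of 2 does not get arbitrarily close to arbitrarily long arithmetic progressions; in particular, there exist k ∈ ℕ and ε > 0 such that every arithmetic progression P of length k and gap Δ > 0 satisfies sup_{p ∈ P} inf_{n ≥ 1} |p − 2^n| > εΔ. -/
/-- The powers of 2 do not get arbitrarily close to arbitrarily long arithmetic
progressions. -/
theorem powers_of_two_not_closeToAPs :
    ∃ k : ℕ, ∃ ε : ℝ, 0 < ε ∧ ∀ x Δ : ℝ, 0 < Δ →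
      ∃ i : ℕ, i < k ∧
        sInf {d : ℝ | ∃ n : ℕ, 1 ≤ n ∧ d = |x + i * Δ - (2 : ℝ) ^ n|} > ε * Δ := by
  refine ⟨4, 1/20, by norm_num, fun x Δ hΔ => ?_⟩
  by_contra hcon
  push_neg at hcon
  have key : ∀ i : ℕ, i < 4 → ∃ n : ℕ, 1 ≤ n ∧ |x + i * Δ - (2:ℝ)^n| < Δ/10 := by
    intro i hi
    have hne : {d : ℝ | ∃ n : ℕ, 1 ≤ n ∧ d = |x + i * Δ - (2 : ℝ) ^ n|}.Nonempty :=
      ⟨|x + i * Δ - (2:ℝ)^1|, 1, le_refl 1, rfl⟩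
    have hlt : sInf {d : ℝ | ∃ n : ℕ, 1 ≤ n ∧ d = |x + i * Δ - (2 : ℝ) ^ n|} < Δ/10 :=
      lt_of_le_of_lt (hcon i hi) (by linarith)
    obtain ⟨d, ⟨n, hn, rfl⟩, hd⟩ := exists_lt_of_csInf_lt hne hlt
    exact ⟨n, hn, hd⟩
  obtain ⟨n0, hn0, h0⟩ := key 0 (by norm_num)
  obtain ⟨n1, hn1, h1⟩ := key 1 (by norm_num)
  obtain ⟨n2, hn2, h2⟩ := key 2 (by norm_num)
  obtain ⟨n3, hn3, h3⟩ := key 3 (by norm_num)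
  rw [abs_lt] at h0 h1 h2 h3
  push_cast at h0 h1 h2 h3
  have hstep : ∀ a b : ℕ, (2:ℝ)^a < 2^b → 2 * (2:ℝ)^a ≤ 2^b := by
    intro a b h
    have hab : a < b := by
      by_contra hba
      push_neg at hba
      exact absurd (pow_le_pow_right₀ (by norm_num : (1:ℝ) ≤ 2) hba) (not_le.mpr h)
    calc 2 * (2:ℝ)^a = 2^(a+1) := by ring
    _ ≤ 2^b := pow_le_pow_right₀ (by norm_num) hab
  have h23 : (2:ℝ)^n2 < 2^n3 := by linarith
  have H23 := hstep n2 n3 h23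
  have hpos : (0:ℝ) < 2^n0 := by positivity
  linarith
end
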